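/- Let G = (V, E) be a finite undirected multigraph with at least one vertex. Let arb(G) denote the minimum over all integral orientations D of G of the maximum in-degree max_{v ∈ V} d⁻_D(v), and let lpopt(G) denote the minimum over all fractional orientations y of G of the maximum fractional in-degree max_{v ∈ V} ȳ(v). Then lpopt(G) ≤ arb(G) ≤ lpopt(G) + 1. -/

import Mathlib

open Finset

/-- A fractional orientation of a finite undirected multigraph whose edges are
indexed by `E`, where edge `e` joins the two distinct vertices `a e` and `b e`.
`y e v` is the (nonnegative) fraction of edge `e` oriented toward `v`, and for
each edge the two fractions at its endpoints sum to `1`. -/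
structure FracOrient (V E : Type*) (a b : E → V) where
  y : E → V → ℝ
  nonneg : ∀ e v, 0 ≤ y e v
  sum_one : ∀ e, y e (a e) + y e (b e) = 1

/-- The fractional in-degree `ȳ(v)`: the sum, over edges incident to `v`,
of the fraction of the edge oriented toward `v`. -/
noncomputable def inDeg {V E : Type*} [Fintype E] [DecidableEq V]
    (a b : E → V) (y : E → V → ℝ) (v : V) : ℝ :=
  ∑ e ∈ univ.filter (fun e => a e = v ∨ b e = v), y e v

/-- The maximum fractional in-degree `max_{v ∈ V} ȳ(v)`. -/
noncomputable def maxInDeg {V E : Type*} [Fintype E] [DecidableEq V]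
    (a b : E → V) (y : E → V → ℝ) : ℝ :=
  sSup (Set.range (inDeg a b y))

/-- The density `|E(S)|/|S|` of a set `S` of vertices: the number of edges with
both endpoints in `S` (counted with multiplicity), divided by `|S|`. -/
noncomputable def density {V E : Type*} [Fintype E] [DecidableEq V]
    (a b : E → V) (S : Finset V) : ℝ :=
  ((univ.filter fun e => a e ∈ S ∧ b e ∈ S).card : ℝ) / S.card

/-- The maximum subgraph density `ρ(G) = max_{∅ ≠ S ⊆ V} |E(S)|/|S|`. -/
noncomputable def maxDensity {V E : Type*} [Fintype E] [DecidableEq V]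
    (a b : E → V) : ℝ :=
  sSup { d : ℝ | ∃ S : Finset V, S.Nonempty ∧ d = density a b S }

/-- A fractional orientation is locally optimal if it never directs any
fraction of an edge toward an endpoint of strictly larger in-degree. -/
def LocallyOpt {V E : Type*} [Fintype E] [DecidableEq V]
    (a b : E → V) (y : E → V → ℝ) : Prop :=
  ∀ e, (0 < y e (b e) → inDeg a b y (b e) ≤ inDeg a b y (a e)) ∧
       (0 < y e (a e) → inDeg a b y (a e) ≤ inDeg a b y (b e))

/-- `(α, β)`-local optimality: if `y(e,v) > 0` then `ȳ(v) < (1+α)·ȳ(u) + β`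
for the other endpoint `u` of `e`. -/
def ApxLocallyOpt {V E : Type*} [Fintype E] [DecidableEq V]
    (a b : E → V) (y : E → V → ℝ) (α β : ℝ) : Prop :=
  ∀ e, (0 < y e (b e) → inDeg a b y (b e) < (1 + α) * inDeg a b y (a e) + β) ∧
       (0 < y e (a e) → inDeg a b y (a e) < (1 + α) * inDeg a b y (b e) + β)

/-- The in-degree of `v` under an integral orientation given by a head map
`h : E → V` (edge `e` is directed toward `h e`). -/
noncomputable def intInDeg {V E : Type*} [Fintype E] [DecidableEq V]
    (h : E → V) (v : V) : ℝ :=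
  ((univ.filter fun e => h e = v).card : ℝ)

/-!
An integral orientation is a fractional one, so `lpopt ≤ arb`. Conversely, under any fractional
orientation `y` the edges with both ends in a vertex set `S` send their full weight `|E(S)|` into
`S`, so `|E(S)| ≤ |S| · max ȳ`, and therefore `|E(S)| ≤ k |S|` for `k = ⌈lpopt⌉`. This is Hall's
condition for matching every edge injectively to one of `k` slots at one of its endpoints, and such
a matching is an integral orientation of maximum in-degree at most `k < lpopt + 1`.
-/

section

variable {V E : Type*} [Fintype E] [DecidableEq V]

def edgesWithin (a b : E → V) (S : Finset V) : Finset E :=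
  {e | a e ∈ S ∧ b e ∈ S}

@[simp]
theorem mem_edgesWithin {a b : E → V} {S : Finset V} {e : E} :
    e ∈ edgesWithin a b S ↔ a e ∈ S ∧ b e ∈ S := by
  simp [edgesWithin]

noncomputable def lpopt (a b : E → V) : ℝ :=
  sInf { μ : ℝ | ∃ o : FracOrient V E a b, μ = maxInDeg a b o.y }

noncomputable def arb (a b : E → V) : ℝ :=
  sInf { μ : ℝ | ∃ h : E → V, (∀ e, h e = a e ∨ h e = b e) ∧
    μ = sSup (Set.range (intInDeg h)) }

def FracOrient.ofHead {a b : E → V} (hab : ∀ e, a e ≠ b e) (h : E → V)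
    (hh : ∀ e, h e = a e ∨ h e = b e) : FracOrient V E a b where
  y e v := if h e = v then 1 else 0
  nonneg e v := by split <;> norm_num
  sum_one e := by
    rcases hh e with he | he <;> simp [he, hab e, (hab e).symm]

theorem inDeg_ofHead {a b : E → V} (hab : ∀ e, a e ≠ b e) {h : E → V}
    (hh : ∀ e, h e = a e ∨ h e = b e) (v : V) :
    inDeg a b (FracOrient.ofHead hab h hh).y v = intInDeg h v := by
  rw [inDeg, intInDeg, FracOrient.ofHead, sum_boole, filter_filter]
  congr 3
  ext e
  refine ⟨And.right, fun hv => ⟨?_, hv⟩⟩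
  rcases hh e with he | he <;> simp [← he, hv]

theorem maxInDeg_ofHead {a b : E → V} (hab : ∀ e, a e ≠ b e) {h : E → V}
    (hh : ∀ e, h e = a e ∨ h e = b e) :
    maxInDeg a b (FracOrient.ofHead hab h hh).y = sSup (Set.range (intInDeg h)) := by
  rw [maxInDeg, funext (inDeg_ofHead hab hh)]

theorem maxInDeg_nonneg {a b : E → V} (o : FracOrient V E a b) : 0 ≤ maxInDeg a b o.y :=
  Real.iSup_nonneg fun _ => sum_nonneg fun e _ => o.nonneg e _

theorem inDeg_le_maxInDeg [Finite V] (a b : E → V) (y : E → V → ℝ) (v : V) :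
    inDeg a b y v ≤ maxInDeg a b y :=
  le_csSup (Set.finite_range _).bddAbove ⟨v, rfl⟩

theorem card_edgesWithin_le_sum_inDeg {a b : E → V} (hab : ∀ e, a e ≠ b e)
    (o : FracOrient V E a b) (S : Finset V) :
    (#(edgesWithin a b S) : ℝ) ≤ ∑ v ∈ S, inDeg a b o.y v := by
  have hends : ∀ e ∈ edgesWithin a b S,
      {v ∈ S | a e = v ∨ b e = v} = {a e, b e} := by
    intro e he
    ext v
    rw [mem_edgesWithin] at he
    simp only [mem_filter, mem_insert, mem_singleton]
    constructor
    · rintro ⟨-, h | h⟩ <;> simp [h]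
    · rintro (rfl | rfl) <;> simp [he]
  calc (#(edgesWithin a b S) : ℝ)
      = ∑ e ∈ edgesWithin a b S, ∑ v ∈ S with a e = v ∨ b e = v, o.y e v := by
        rw [cast_card]
        refine sum_congr rfl fun e he => ?_
        rw [hends e he, sum_pair (hab e), o.sum_one]
    _ ≤ ∑ e, ∑ v ∈ S with a e = v ∨ b e = v, o.y e v :=
        sum_le_sum_of_subset_of_nonneg (subset_univ _)
          fun e _ _ => sum_nonneg fun v _ => o.nonneg e v
    _ = ∑ v ∈ S, inDeg a b o.y v := by
        simp only [inDeg]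
        exact sum_comm' fun e v => by simp [and_comm]

theorem card_edgesWithin_le_mul_maxInDeg [Finite V] {a b : E → V} (hab : ∀ e, a e ≠ b e)
    (o : FracOrient V E a b) (S : Finset V) :
    (#(edgesWithin a b S) : ℝ) ≤ #S * maxInDeg a b o.y := calc
  _ ≤ ∑ v ∈ S, inDeg a b o.y v := card_edgesWithin_le_sum_inDeg hab o S
  _ ≤ ∑ _v ∈ S, maxInDeg a b o.y := sum_le_sum fun v _ => inDeg_le_maxInDeg a b o.y v
  _ = #S * maxInDeg a b o.y := by rw [sum_const, nsmul_eq_mul]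

theorem card_edgesWithin_le_lpopt_mul [Finite V] {a b : E → V} (hab : ∀ e, a e ≠ b e)
    (S : Finset V) : (#(edgesWithin a b S) : ℝ) ≤ lpopt a b * #S := by
  rcases S.eq_empty_or_nonempty with rfl | hS
  · simp [edgesWithin]
  rw [← div_le_iff₀ (by exact_mod_cast hS.card_pos)]
  refine le_csInf ⟨_, .ofHead hab a (fun _ => .inl rfl), rfl⟩ ?_
  rintro μ ⟨o, rfl⟩
  rw [div_le_iff₀' (by exact_mod_cast hS.card_pos)]
  exact card_edgesWithin_le_mul_maxInDeg hab o S

/-- Hall's theorem, matching each edge to one of `k` slots at one of its endpoints. -/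
theorem exists_orientation_intInDeg_le {a b : E → V} (k : ℕ)
    (hk : ∀ S : Finset V, #(edgesWithin a b S) ≤ k * #S) :
    ∃ h : E → V, (∀ e, h e = a e ∨ h e = b e) ∧ ∀ v, intInDeg h v ≤ k := by
  have hall : ∀ s : Finset E,
      #s ≤ #(s.biUnion fun e => ({a e, b e} : Finset V) ×ˢ (univ : Finset (Fin k))) := by
    intro s
    set S := s.biUnion fun e => ({a e, b e} : Finset V)
    have hs : s ⊆ edgesWithin a b S := fun e he => by
      simp only [mem_edgesWithin, S, mem_biUnion]
      exact ⟨⟨e, he, by simp⟩, ⟨e, he, by simp⟩⟩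
    have hslots : (s.biUnion fun e => ({a e, b e} : Finset V) ×ˢ (univ : Finset (Fin k)))
        = S ×ˢ univ := by
      ext; simp [S]
    rw [hslots, card_product, card_univ, Fintype.card_fin, mul_comm]
    exact (card_le_card hs).trans (hk S)
  obtain ⟨f, hf_inj, hf_mem⟩ := (all_card_le_biUnion_card_iff_exists_injective _).mp hall
  refine ⟨fun e => (f e).1, fun e => by simpa using (mem_product.mp (hf_mem e)).1, fun v => ?_⟩
  have hfiber : #{e | (f e).1 = v} ≤ #(({v} : Finset V) ×ˢ (univ : Finset (Fin k))) :=
    card_le_card_of_injOn f (fun e he => by simp_all [Prod.ext_iff]) hf_inj.injOn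
  rw [intInDeg]
  exact_mod_cast hfiber.trans (by simp)

theorem lpopt_le_arb [Finite V] {a b : E → V} (hab : ∀ e, a e ≠ b e) : lpopt a b ≤ arb a b :=
  csInf_le_csInf ⟨0, by rintro _ ⟨o, rfl⟩; exact maxInDeg_nonneg o⟩
    ⟨_, a, fun _ => .inl rfl, rfl⟩
    (by rintro _ ⟨h, hh, rfl⟩; exact ⟨.ofHead hab h hh, (maxInDeg_ofHead hab hh).symm⟩)

theorem arb_le_lpopt_add_one [Finite V] {a b : E → V} (hab : ∀ e, a e ≠ b e) :
    arb a b ≤ lpopt a b + 1 := by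
  have hlpopt : 0 ≤ lpopt a b := Real.sInf_nonneg (by rintro _ ⟨o, rfl⟩; exact maxInDeg_nonneg o)
  set k := ⌈lpopt a b⌉₊
  obtain ⟨h, hh, hk⟩ := exists_orientation_intInDeg_le (a := a) (b := b) k fun S => by
    exact_mod_cast (card_edgesWithin_le_lpopt_mul hab S).trans
      (mul_le_mul_of_nonneg_right (Nat.le_ceil (lpopt a b)) (Nat.cast_nonneg #S))
  calc arb a b ≤ sSup (Set.range (intInDeg h)) :=
        csInf_le ⟨0, by rintro _ ⟨h, -, rfl⟩; exact Real.iSup_nonneg fun _ => Nat.cast_nonneg _⟩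
          ⟨h, hh, rfl⟩
    _ ≤ k := Real.iSup_le hk (Nat.cast_nonneg k)
    _ ≤ lpopt a b + 1 := (Nat.ceil_lt_add_one hlpopt).le

end

theorem lpopt_le_arb_le_lpopt_add_one_general {V E : Type*} [Fintype V] [Fintype E]
    [DecidableEq V] (a b : E → V) (hab : ∀ e, a e ≠ b e) :
    sInf { μ : ℝ | ∃ o : FracOrient V E a b, μ = maxInDeg a b o.y } ≤
      sInf { μ : ℝ | ∃ h : E → V, (∀ e, h e = a e ∨ h e = b e) ∧
        μ = sSup (Set.range (intInDeg h)) } ∧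
    sInf { μ : ℝ | ∃ h : E → V, (∀ e, h e = a e ∨ h e = b e) ∧
        μ = sSup (Set.range (intInDeg h)) } ≤
      sInf { μ : ℝ | ∃ o : FracOrient V E a b, μ = maxInDeg a b o.y } + 1 :=
  ⟨lpopt_le_arb hab, arb_le_lpopt_add_one hab⟩

/-- Let `arb(G)` be the minimum over integral orientations of
the maximum in-degree, and `lpopt(G)` the minimum over fractional orientations
of the maximum fractional in-degree. Then `lpopt(G) ≤ arb(G) ≤ lpopt(G) + 1`. -/
theorem lpopt_le_arb_le_lpopt_add_one {V E : Type*} [Fintype V] [Fintype E]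
    [DecidableEq V] [Nonempty V] (a b : E → V) (hab : ∀ e, a e ≠ b e) :
    sInf { μ : ℝ | ∃ o : FracOrient V E a b, μ = maxInDeg a b o.y } ≤
      sInf { μ : ℝ | ∃ h : E → V, (∀ e, h e = a e ∨ h e = b e) ∧
        μ = sSup (Set.range (intInDeg h)) } ∧
    sInf { μ : ℝ | ∃ h : E → V, (∀ e, h e = a e ∨ h e = b e) ∧
        μ = sSup (Set.range (intInDeg h)) } ≤
      sInf { μ : ℝ | ∃ o : FracOrient V E a b, μ = maxInDeg a b o.y } + 1 :=
  lpopt_le_arb_le_lpopt_add_one_general a b hab
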